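/- arXiv:1703.01589 — 5 statements merged into one kernel-verified Lean document; each statement's English description precedes it below -/
import Mathlib

section
/- Let V be the matrix with rows (1,1,1),(0,1,1),(0,0,1), F₁ = ![![1,0,1],![0,1,0],![1,0,0]], and F₀ = ![![0,0,1],![1,0,0],![0,1,1]]. Then for all k ≥ 0, V · F₁^k · F₀ equals the matrix with rows (1, f_k, f_{k+2}), (1, f_{k-2}, f_k), (0, f_{k-2}, f_k), where f is the Fibonacci sequence with f_{-2}=1, f_{-1}=0, f_0=1, f_1=1. -/
open Matrix

lemma pow_F1 (f : ℕ → ℤ) (h0 : f 0 = 1) (h1 : f 1 = 0)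
    (hrec : ∀ n : ℕ, f (n + 2) = f (n + 1) + f n) (k : ℕ) :
    (!![1, 0, 1; 0, 1, 0; 1, 0, 0] : Matrix (Fin 3) (Fin 3) ℤ) ^ k =
      !![f (k + 2), 0, f (k + 1); 0, 1, 0; f (k + 1), 0, f k] := by
  have h2 : ∀ n : ℕ, f (2 + n) = f (1 + n) + f n := by
    intro n; have h := hrec n
    rw [show n + 2 = 2 + n by ring, show n + 1 = 1 + n by ring] at h; exact h
  have h3 : ∀ n : ℕ, f (3 + n) = f (2 + n) + f (1 + n) := by
    intro n; have h := hrec (n + 1)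
    rw [show n + 1 + 2 = 3 + n by ring, show n + 1 + 1 = 2 + n by ring,
      show n + 1 = 1 + n by ring] at h; exact h
  induction k with
  | zero => simp [hrec 0, h0, h1, Matrix.one_fin_three]
  | succ n ih =>
    rw [pow_succ, ih]
    simp only [Matrix.mul_fin_three]
    ring_nf
    simp [h3, h2]

/-- `V · F₁^k · F₀` for the `(e,e,(13))` TRIP map, in terms of Fibonacci numbers.
Here `f n` represents the paper's `f_{n-2}`, so `f 0 = f_{-2} = 1`, `f 1 = f_{-1} = 0`,
and `f (k+2) = f k`, `f (k+4) = f_{k+2}`. -/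
theorem stmt1 (f : ℕ → ℤ) (h0 : f 0 = 1) (h1 : f 1 = 0)
    (hrec : ∀ n : ℕ, f (n + 2) = f (n + 1) + f n) (k : ℕ) :
    (!![1, 1, 1; 0, 1, 1; 0, 0, 1] : Matrix (Fin 3) (Fin 3) ℤ) *
        (!![1, 0, 1; 0, 1, 0; 1, 0, 0] : Matrix (Fin 3) (Fin 3) ℤ) ^ k *
        (!![0, 0, 1; 1, 0, 0; 0, 1, 1] : Matrix (Fin 3) (Fin 3) ℤ) =
      !![1, f (k + 2), f (k + 4); 1, f k, f (k + 2); 0, f k, f (k + 2)] := by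
  have h2 : ∀ n : ℕ, f (2 + n) = f (1 + n) + f n := by
    intro n; have h := hrec n
    rw [show n + 2 = 2 + n by ring, show n + 1 = 1 + n by ring] at h; exact h
  have h3 : ∀ n : ℕ, f (3 + n) = f (2 + n) + f (1 + n) := by
    intro n; have h := hrec (n + 1)
    rw [show n + 1 + 2 = 3 + n by ring, show n + 1 + 1 = 2 + n by ring,
      show n + 1 = 1 + n by ring] at h; exact h
  have h4 : ∀ n : ℕ, f (4 + n) = f (3 + n) + f (2 + n) := by
    intro n; have h := hrec (n + 2)
    rw [show n + 2 + 2 = 4 + n by ring, show n + 2 + 1 = 3 + n by ring,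
      show n + 2 = 2 + n by ring] at h; exact h
  rw [pow_F1 f h0 h1 hrec k]
  simp only [Matrix.mul_fin_three]
  ring_nf
  simp [h4, h3, h2]
  ring_nf
end

section
/- For every (x,y) in the open triangle Δ = {(x,y) : 0 < y < x < 1}, the function h(x,y) = 1/(x(y+1)) satisfies the fixed-point equation ∑_{k=0}^∞ (1/(kx+y+1)^3) · h(1/(kx+y+1), x/(kx+y+1)) = h(x,y); i.e., 1/(x(y+1)) is an eigenfunction of eigenvalue 1 of the transfer operator of the triangle map T_{e,e,e}. -/
/-- `h(x,y) = 1/(x(y+1))` is an eigenfunction of eigenvalue `1` of the transfer operator of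
the triangle map `T_{e,e,e}` on the open triangle `Δ = {0 < y < x < 1}`. -/
theorem stmt8 (x y : ℝ) (hy : 0 < y) (hyx : y < x) (hx : x < 1) :
    (∑' k : ℕ, (1 / ((k : ℝ) * x + y + 1) ^ 3) *
      (1 / ((1 / ((k : ℝ) * x + y + 1)) * (x / ((k : ℝ) * x + y + 1) + 1))))
      = 1 / (x * (y + 1)) := by
  have hx0 : 0 < x := hy.trans hyx
  have hd : ∀ k : ℕ, 0 < (k : ℝ) * x + y + 1 := fun k => by positivity
  set f : ℕ → ℝ := fun k => 1 / (x * ((k : ℝ) * x + y + 1)) with hf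
  have hkey : ∀ k : ℕ, (1 / ((k : ℝ) * x + y + 1) ^ 3) *
      (1 / ((1 / ((k : ℝ) * x + y + 1)) * (x / ((k : ℝ) * x + y + 1) + 1)))
      = f k - f (k + 1) := by
    intro k
    have h1 := (hd k).ne'
    have h2 := (hd (k + 1)).ne'
    simp only [hf]
    push_cast at h2 ⊢
    have h3 : x + ((k : ℝ) * x + y + 1) ≠ 0 := by positivity
    field_simp
    ring
  have hsum : HasSum (fun k : ℕ => (1 / ((k : ℝ) * x + y + 1) ^ 3) *
      (1 / ((1 / ((k : ℝ) * x + y + 1)) * (x / ((k : ℝ) * x + y + 1) + 1))))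
      (1 / (x * (y + 1))) := by
    rw [hasSum_iff_tendsto_nat_of_nonneg]
    · have hps : ∀ n : ℕ, ∑ k ∈ Finset.range n, (1 / ((k : ℝ) * x + y + 1) ^ 3) *
          (1 / ((1 / ((k : ℝ) * x + y + 1)) * (x / ((k : ℝ) * x + y + 1) + 1)))
          = f 0 - f n := by
        intro n
        rw [Finset.sum_congr rfl fun k _ => hkey k, Finset.sum_range_sub']
      simp only [hps]
      have h0 : f 0 = 1 / (x * (y + 1)) := by simp [hf]
      have htend : Filter.Tendsto f Filter.atTop (nhds 0) := by
        have hden : Filter.Tendsto (fun k : ℕ => x * ((k : ℝ) * x + y + 1))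
            Filter.atTop Filter.atTop := by
          apply Filter.Tendsto.const_mul_atTop hx0
          apply Filter.tendsto_atTop_add_const_right
          apply Filter.tendsto_atTop_add_const_right
          exact Filter.Tendsto.atTop_mul_const hx0 tendsto_natCast_atTop_atTop
        simpa [hf, one_div, mul_inv, Pi.inv_def] using hden.inv_tendsto_atTop
      have h2 := Filter.Tendsto.const_sub (f 0) htend
      rw [sub_zero] at h2
      rw [← h0]
      exact h2
    · intro k
      have := hd k
      positivity
  exact hsum.tsum_eq
end

section
/- For every (x,y) in the open triangle Δ = {(x,y) : 0 < y < x < 1}, the function h(x,y) = 1/(x(1-y)) satisfies ∑_{k=0}^∞ (1/(kx+x-y+1)^3) · h(1/(kx+x-y+1), x/(kx+x-y+1)) = h(x,y); i.e., it is an eigenfunction of eigenvalue 1 for the transfer operator of T_{e,23,e}. -/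
lemma stmt9_aux (x E : ℝ) (hx : 0 < x) (hE : 0 < E) :
    1 / (E + x) ^ 3 * (1 / ((1 / (E + x)) * (1 - x / (E + x))))
      = 1 / (x * E) - 1 / (x * (E + x)) := by
  have h1 : E + x ≠ 0 := by positivity
  have h2 : (E + x) - x ≠ 0 := by simpa using hE.ne'
  field_simp
  ring

/-- `h(x,y) = 1/(x(1-y))` is an eigenfunction of eigenvalue `1` of the transfer operator of
`T_{e,23,e}` on the open triangle `Δ = {0 < y < x < 1}`. -/
theorem stmt9 (x y : ℝ) (hy : 0 < y) (hyx : y < x) (hx : x < 1) :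
    (∑' k : ℕ, (1 / ((k : ℝ) * x + x - y + 1) ^ 3) *
      (1 / ((1 / ((k : ℝ) * x + x - y + 1)) * (1 - x / ((k : ℝ) * x + x - y + 1)))))
      = 1 / (x * (1 - y)) := by
  have hx0 : 0 < x := hy.trans hyx
  set f : ℕ → ℝ := fun k => 1 / (x * ((k : ℝ) * x - y + 1)) with hf
  have hE : ∀ k : ℕ, 0 < (k : ℝ) * x - y + 1 := by
    intro k
    have : (0:ℝ) ≤ (k : ℝ) * x := by positivity
    linarith
  have hterm : ∀ k : ℕ,
      (1 / ((k : ℝ) * x + x - y + 1) ^ 3) *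
        (1 / ((1 / ((k : ℝ) * x + x - y + 1)) * (1 - x / ((k : ℝ) * x + x - y + 1))))
      = f k - f (k + 1) := by
    intro k
    have hrw : (k : ℝ) * x + x - y + 1 = ((k : ℝ) * x - y + 1) + x := by ring
    have hfk1 : f (k + 1) = 1 / (x * (((k : ℝ) * x - y + 1) + x)) := by
      simp only [hf]
      push_cast
      ring_nf
    rw [hrw, hfk1]
    exact stmt9_aux x _ hx0 (hE k)
  rw [tsum_congr hterm]
  have hsum : HasSum (fun k => f k - f (k + 1)) (1 / (x * (1 - y))) := by
    have hnn : ∀ k : ℕ, 0 ≤ f k - f (k + 1) := by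
      intro k
      have hEk := hE k
      have hEk1 := hE (k + 1)
      have hle : f (k + 1) ≤ f k := by
        apply one_div_le_one_div_of_le (by positivity)
        have : (k : ℝ) * x ≤ ((k : ℝ) + 1) * x := by nlinarith
        push_cast
        nlinarith
      linarith
    rw [hasSum_iff_tendsto_nat_of_nonneg hnn]
    have hps : ∀ n : ℕ, ∑ i ∈ Finset.range n, (f i - f (i + 1)) = f 0 - f n := by
      intro n; exact Finset.sum_range_sub' f n
    simp only [hps]
    have hf0 : f 0 = 1 / (x * (1 - y)) := by
      simp only [hf, Nat.cast_zero, zero_mul]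
      ring_nf
    rw [hf0]
    have hfn : Filter.Tendsto f Filter.atTop (nhds 0) := by
      have h1 : Filter.Tendsto (fun n : ℕ => x * ((n : ℝ) * x - y + 1))
          Filter.atTop Filter.atTop := by
        apply Filter.Tendsto.const_mul_atTop hx0
        apply Filter.tendsto_atTop_add_const_right
        apply Filter.tendsto_atTop_add_const_right
        exact Filter.Tendsto.atTop_mul_const hx0 tendsto_natCast_atTop_atTop
      refine Filter.Tendsto.congr (fun n => ?_) h1.inv_tendsto_atTop
      simp [hf]
    simpa using (tendsto_const_nhds.sub hfn)
  exact hsum.tsum_eq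
end

section
/- For every (x,y) in the open triangle Δ = {(x,y) : 0 < y < x < 1}, the function h(x,y) = 1/(x(x-y+1)) satisfies ∑_{k=0}^∞ (1/(kx+x-y+1)^3) · h(1/(kx+x-y+1), (1-x)/(kx+x-y+1)) = h(x,y); i.e., 1/(x(x-y+1)) is an eigenfunction of eigenvalue 1 for the transfer operator of T_{23,23,23}. -/
/-!
Writing `d = kx + x - y + 1`, the `k`-th term of the series is `1 / (d (d + x))`, and the
denominators of consecutive terms differ by exactly `x`. Hence the term equals `g k - g (k + 1)`
with `g k = 1 / (x (kx + x - y + 1))`, the series telescopes, and its sum is `g 0 = h(x, y)`.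
-/

open Filter Topology

theorem Antitone.hasSum_sub_succ {f : ℕ → ℝ} {l : ℝ} (hf : Antitone f)
    (hl : Tendsto f atTop (𝓝 l)) : HasSum (fun n ↦ f n - f (n + 1)) (f 0 - l) := by
  rw [hasSum_iff_tendsto_nat_of_nonneg fun n ↦ sub_nonneg.2 (hf n.le_succ)]
  simpa only [Finset.sum_range_sub'] using tendsto_const_nhds.sub hl

theorem hasSum_one_div_consecutive_arith_mul {a c : ℝ} (ha : 0 < a) (hc : 0 < c) :
    HasSum (fun k : ℕ ↦ 1 / ((k * a + c) * (k * a + c + a))) (1 / (a * c)) := by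
  set g : ℕ → ℝ := fun k ↦ 1 / (a * (k * a + c))
  have hpos (k : ℕ) : 0 < (k : ℝ) * a + c := by positivity
  have hanti : Antitone g := antitone_nat_of_succ_le fun k ↦ by
    have := hpos k
    simp only [g, Nat.cast_succ]
    gcongr
    linarith
  have hlim : Tendsto g atTop (𝓝 0) := by
    have hden : Tendsto (fun k : ℕ ↦ a * (k * a + c)) atTop atTop :=
      Tendsto.const_mul_atTop ha <| tendsto_atTop_add_const_right _ _ <|
        tendsto_natCast_atTop_atTop.atTop_mul_const ha
    exact hden.inv_tendsto_atTop.congr fun k ↦ (one_div _).symm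
  have hstep (k : ℕ) : g k - g (k + 1) = 1 / ((k * a + c) * (k * a + c + a)) := by
    have := hpos k
    simp only [g, Nat.cast_succ]
    field_simp
    ring
  have hsum := hanti.hasSum_sub_succ hlim
  simp only [hstep, sub_zero] at hsum
  simpa [g] using hsum

theorem transfer_term_eq_one_div_mul {d x : ℝ} (hd : d ≠ 0) (hdx : d + x ≠ 0) :
    1 / d ^ 3 * (1 / (1 / d * (1 / d - (1 - x) / d + 1))) = 1 / (d * (d + x)) := by
  rw [show 1 / d - (1 - x) / d + 1 = (d + x) / d by field_simp; ring]
  field_simp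

theorem stmt10_general (x y : ℝ) (hy : 0 < y) (hyx : y < x) :
    (∑' k : ℕ, (1 / ((k : ℝ) * x + x - y + 1) ^ 3) *
      (1 / ((1 / ((k : ℝ) * x + x - y + 1)) *
        (1 / ((k : ℝ) * x + x - y + 1) - (1 - x) / ((k : ℝ) * x + x - y + 1) + 1))))
      = 1 / (x * (x - y + 1)) := by
  have hx : 0 < x := hy.trans hyx
  have hc : 0 < x - y + 1 := by linarith
  have hpos (k : ℕ) : 0 < (k : ℝ) * x + x - y + 1 := by
    have : 0 ≤ (k : ℝ) * x := by positivity
    linarith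
  have hterm (k : ℕ) :=
    transfer_term_eq_one_div_mul (hpos k).ne' (hpos k |>.trans (lt_add_of_pos_right _ hx)).ne'
  rw [tsum_congr hterm]
  simpa only [add_sub_assoc, add_assoc] using (hasSum_one_div_consecutive_arith_mul hx hc).tsum_eq

/-- `h(x,y) = 1/(x(x-y+1))` is an eigenfunction of eigenvalue `1` of the transfer operator of
`T_{23,23,23}` on the open triangle `Δ = {0 < y < x < 1}`. -/
theorem stmt10 (x y : ℝ) (hy : 0 < y) (hyx : y < x) (hx : x < 1) :
    (∑' k : ℕ, (1 / ((k : ℝ) * x + x - y + 1) ^ 3) *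
      (1 / ((1 / ((k : ℝ) * x + x - y + 1)) *
        (1 / ((k : ℝ) * x + x - y + 1) - (1 - x) / ((k : ℝ) * x + x - y + 1) + 1))))
      = 1 / (x * (x - y + 1)) :=
  stmt10_general x y hy hyx
end

section
/- For the map T_{e,23,e}, the Gauss–Kuzmin probability of digit 0 equals 1/2; that is, ∫_{1/2}^{1} ∫_{1-x}^{x} 6/(π² x (1-y)) dy dx = 1/2. -/
/-!
The inner integral is `(6/π²) · log (x/(1-x)) / x`. The substitution `x = 1/(1+u)` turns the
outer integral into `(6/π²) ∫₀¹ -log u / (1+u) du`; expanding `1/(1+u)` as a geometric series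
and using `∫₀¹ uᵐ (-log u) du = 1/(m+1)²` gives the alternating Basel sum
`∑ (-1)ⁿ/(n+1)² = π²/12`.
-/

open MeasureTheory Set Real

lemma integrableOn_pow_mul_log (m : ℕ) :
    IntegrableOn (fun u : ℝ => u ^ m * log u) (Ioo 0 1) :=
  (intervalIntegrable_iff_integrableOn_Ioo_of_le zero_le_one).mp <|
    intervalIntegral.intervalIntegrable_log'.continuousOn_mul (continuous_pow m).continuousOn

lemma integral_pow_mul_log (m : ℕ) :
    ∫ u in Ioo (0 : ℝ) 1, u ^ m * log u = -1 / ((m : ℝ) + 1) ^ 2 := by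
  have hm : (m : ℝ) + 1 ≠ 0 := by positivity
  set G : ℝ → ℝ := fun u => u ^ (m + 1) * log u / (m + 1) - u ^ (m + 1) / (m + 1) ^ 2
  have hG_cont : Continuous G := by
    have : Continuous fun u : ℝ => u ^ (m + 1) * log u := by
      simp_rw [pow_succ, mul_assoc]
      exact (continuous_pow m).mul continuous_mul_log
    fun_prop
  have hG_deriv : ∀ u ∈ Ioo (0 : ℝ) 1, HasDerivAt G (u ^ m * log u) u := by
    intro u hu
    refine ((((hasDerivAt_pow (m + 1) u).mul (hasDerivAt_log hu.1.ne')).div_const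
      ((m : ℝ) + 1)).sub ((hasDerivAt_pow (m + 1) u).div_const (((m : ℝ) + 1) ^ 2))).congr_deriv ?_
    have := hu.1.ne'
    simp only [add_tsub_cancel_right]
    push_cast
    field_simp
    ring
  rw [← integral_Ioc_eq_integral_Ioo, ← intervalIntegral.integral_of_le zero_le_one,
    intervalIntegral.integral_eq_sub_of_hasDerivAt_of_le zero_le_one hG_cont.continuousOn hG_deriv
      ((intervalIntegrable_iff_integrableOn_Ioo_of_le zero_le_one).mpr
        (integrableOn_pow_mul_log m))]
  simp [G, field]

lemma hasSum_one_div_odd_sq_sub_one_div_even_sq :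
    HasSum (fun j : ℕ => 1 / (2 * (j : ℝ) + 1) ^ 2 - 1 / (2 * (j : ℝ) + 2) ^ 2) (π ^ 2 / 12) := by
  set f : ℕ → ℝ := fun n => 1 / ((n : ℝ) + 1) ^ 2 with hf
  have hall : HasSum f (π ^ 2 / 6) := by
    simpa [hf] using (hasSum_nat_add_iff' 1).mpr hasSum_zeta_two
  have hodd : HasSum (fun k => f (2 * k + 1)) (π ^ 2 / 24) := by
    have : (fun k => f (2 * k + 1)) = fun k => 1 / 4 * f k := by
      ext k
      simp only [hf]
      push_cast
      field_simp
      ring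
    rw [this, show π ^ 2 / 24 = 1 / 4 * (π ^ 2 / 6) by ring]
    exact hall.mul_left _
  have heven : HasSum (fun k => f (2 * k)) (π ^ 2 / 8) := by
    have he : Summable fun k => f (2 * k) :=
      hall.summable.comp_injective (mul_right_injective₀ (two_ne_zero' ℕ))
    have hsplit := tsum_even_add_odd he hodd.summable
    rw [hall.tsum_eq, hodd.tsum_eq] at hsplit
    convert he.hasSum using 1
    linarith
  have : (fun j : ℕ => 1 / (2 * (j : ℝ) + 1) ^ 2 - 1 / (2 * (j : ℝ) + 2) ^ 2) =
      fun k => f (2 * k) - f (2 * k + 1) := by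
    ext k
    simp only [hf]
    push_cast
    ring
  rw [this, show π ^ 2 / 12 = π ^ 2 / 8 - π ^ 2 / 24 by ring]
  exact heven.sub hodd

lemma hasSum_pow_two_mul_mul_one_sub {u : ℝ} (hu : |u| < 1) :
    HasSum (fun j : ℕ => u ^ (2 * j) * (1 - u)) (1 / (1 + u)) := by
  have h1 : 1 - u ≠ 0 := by linarith [le_abs_self u]
  have h2 : 1 + u ≠ 0 := by linarith [neg_abs_le u]
  have hu2 : |u ^ 2| < 1 := by
    rw [abs_pow]
    exact pow_lt_one₀ (abs_nonneg u) hu two_ne_zero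
  have hsum : 1 / (1 + u) = (1 - u ^ 2)⁻¹ * (1 - u) := by
    rw [show 1 - u ^ 2 = (1 + u) * (1 - u) by ring]
    field_simp
  simpa only [hsum, pow_mul] using (hasSum_geometric_of_abs_lt_one hu2).mul_right (1 - u)

lemma integral_neg_log_div_one_add :
    ∫ u in Ioo (0 : ℝ) 1, -log u / (1 + u) = π ^ 2 / 12 := by
  -- Grouping the alternating series in pairs makes every term nonnegative, so that the
  -- integrals of the norms are summable.
  set F : ℕ → ℝ → ℝ := fun j u => u ^ (2 * j) * (1 - u) * -log u with hF
  have hF_eq : ∀ j, EqOn (F j) (fun u => u ^ (2 * j + 1) * log u - u ^ (2 * j) * log u)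
      (Ioo 0 1) := fun j u _ => by simp only [hF]; ring
  have hF_int : ∀ j, IntegrableOn (F j) (Ioo 0 1) := fun j =>
    ((integrableOn_pow_mul_log _).sub (integrableOn_pow_mul_log _)).congr_fun (hF_eq j).symm
      measurableSet_Ioo
  have hF_integral : ∀ j : ℕ, ∫ u in Ioo (0 : ℝ) 1, F j u =
      1 / (2 * (j : ℝ) + 1) ^ 2 - 1 / (2 * (j : ℝ) + 2) ^ 2 := by
    intro j
    rw [setIntegral_congr_fun measurableSet_Ioo (hF_eq j),
      integral_sub (integrableOn_pow_mul_log _) (integrableOn_pow_mul_log _),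
      integral_pow_mul_log, integral_pow_mul_log]
    push_cast
    ring
  have hF_norm : ∀ j, ∫ u in Ioo (0 : ℝ) 1, ‖F j u‖ = ∫ u in Ioo (0 : ℝ) 1, F j u := fun j =>
    setIntegral_congr_fun measurableSet_Ioo fun u hu => Real.norm_of_nonneg <|
      mul_nonneg (mul_nonneg (pow_nonneg hu.1.le _) (sub_nonneg.2 hu.2.le))
        (neg_nonneg.2 (log_nonpos hu.1.le hu.2.le))
  have hF_sum : HasSum (fun j => ∫ u in Ioo (0 : ℝ) 1, F j u) (π ^ 2 / 12) := by
    simpa only [hF_integral] using hasSum_one_div_odd_sq_sub_one_div_even_sq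
  calc ∫ u in Ioo (0 : ℝ) 1, -log u / (1 + u)
      = ∫ u in Ioo (0 : ℝ) 1, ∑' j, F j u := setIntegral_congr_fun measurableSet_Ioo fun u hu => by
        rw [div_eq_mul_one_div, mul_comm]
        exact (((hasSum_pow_two_mul_mul_one_sub
          (abs_lt.2 ⟨by linarith [hu.1], hu.2⟩)).mul_right (-log u)).tsum_eq).symm
    _ = π ^ 2 / 12 := by
        rw [← integral_tsum_of_summable_integral_norm hF_int
          (by simpa only [hF_norm] using hF_sum.summable), hF_sum.tsum_eq]

lemma image_inv_one_add_Ioo_zero_one :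
    (fun u : ℝ => (1 + u)⁻¹) '' Ioo 0 1 = Ioo (1 / 2) 1 := by
  ext x
  constructor
  · rintro ⟨u, ⟨hu₀, hu₁⟩, rfl⟩
    constructor
    · rw [one_div]
      exact inv_strictAnti₀ (by linarith) (by linarith)
    · exact inv_lt_one_of_one_lt₀ (by linarith)
  · rintro ⟨hx₀, hx₁⟩
    refine ⟨x⁻¹ - 1, ⟨?_, ?_⟩, by simp⟩
    · linarith [one_lt_inv₀ (by linarith : 0 < x) |>.mpr hx₁]
    · have : x⁻¹ < 2 := by
        rw [inv_lt_comm₀ (by linarith) two_pos]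
        linarith
      linarith

lemma setIntegral_Ioo_half_one_eq_comp_inv_one_add {E : Type*} [NormedAddCommGroup E]
    [NormedSpace ℝ E] (g : ℝ → E) :
    ∫ x in Ioo (1 / 2 : ℝ) 1, g x = ∫ u in Ioo (0 : ℝ) 1, (1 / (1 + u) ^ 2) • g (1 + u)⁻¹ := by
  have hderiv : ∀ u ∈ Ioo (0 : ℝ) 1,
      HasDerivWithinAt (fun u => (1 + u)⁻¹) (-1 / (1 + u) ^ 2) (Ioo 0 1) u := fun u hu =>
    (((hasDerivAt_id u).const_add 1).inv (by simp; linarith [hu.1])).hasDerivWithinAt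
  have hinj : InjOn (fun u : ℝ => (1 + u)⁻¹) (Ioo 0 1) :=
    (inv_injective.comp (add_right_injective 1)).injOn
  rw [← image_inv_one_add_Ioo_zero_one,
    integral_image_eq_integral_abs_deriv_smul measurableSet_Ioo hderiv hinj]
  refine setIntegral_congr_fun measurableSet_Ioo fun u _ => ?_
  rw [neg_div, abs_neg, abs_of_nonneg (by positivity)]

lemma integral_const_div_one_sub {c x : ℝ} (hx₀ : 0 < x) (hx₁ : x < 1) :
    ∫ y in (1 - x)..x, c / (1 - y) = c * log (x / (1 - x)) := by
  -- `y ↦ 1 - y` maps `[1 - x, x]` onto itself.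
  simp_rw [div_eq_mul_inv c]
  rw [intervalIntegral.integral_const_mul, intervalIntegral.integral_comp_sub_left (fun y => y⁻¹),
    sub_sub_cancel, integral_inv_of_pos (by linarith) hx₀]

/-- The Gauss–Kuzmin probability of the digit `0` for `T_{e,23,e}` equals `1/2`. -/
theorem stmt14 :
    (∫ x in (1 / 2 : ℝ)..1, ∫ y in (1 - x)..x, 6 / (Real.pi ^ 2 * x * (1 - y))) = 1 / 2 := by
  have hinner : EqOn (fun x => ∫ y in (1 - x)..x, 6 / (π ^ 2 * x * (1 - y)))
      (fun x => 6 / (π ^ 2 * x) * log (x / (1 - x))) (Ioo (1 / 2) 1) := fun x hx => by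
    simp only [div_mul_eq_div_div _ (π ^ 2 * x)]
    exact integral_const_div_one_sub (by linarith [hx.1]) hx.2
  have hsubst : EqOn (fun u : ℝ => (1 / (1 + u) ^ 2) • (6 / (π ^ 2 * (1 + u)⁻¹) *
      log ((1 + u)⁻¹ / (1 - (1 + u)⁻¹)))) (fun u => 6 / π ^ 2 * (-log u / (1 + u)))
      (Ioo 0 1) := fun u hu => by
    have hratio : (1 + u)⁻¹ / (1 - (1 + u)⁻¹) = u⁻¹ := by
      have : 1 + u ≠ 0 := by linarith [hu.1]
      field_simp
      ring
    simp only [hratio, log_inv, smul_eq_mul]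
    field_simp
  rw [intervalIntegral.integral_of_le (by norm_num), integral_Ioc_eq_integral_Ioo,
    setIntegral_congr_fun measurableSet_Ioo hinner, setIntegral_Ioo_half_one_eq_comp_inv_one_add,
    setIntegral_congr_fun measurableSet_Ioo hsubst, MeasureTheory.integral_const_mul,
    integral_neg_log_div_one_add]
  field_simp
  norm_num
end
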